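/- For n ≥ 0 and 0 ≤ r ≤ n: ∑_{k=1}^{n} (-1)^{k-1} [n choose k]_q · q^{k(k+1)/2 - rk} / (1 - q^k) = r + ∑_{k=1}^{n} q^k / (1 - q^k), as rational functions in q. -/

import Mathlib

/-!
Generalized Van Hamme identity. Since `q^e / (1 - q^k) = q^(e+k) / (1 - q^k) + q^e`, raising
`r` by one adds `∑_k (-1)^(k-1) [n, k]_q q^(k choose 2) (q^(-r))^k` to the left-hand side, and by
the q-binomial theorem this is `1 - (q^(-r); q)_n = 1` as long as `r < n`. The case `r = 0` is
Van Hamme's identity, proved by induction on `n` with q-Pascal: by the absorption identity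
`[n, k] / (1 - q^(k+1)) = [n+1, k+1] / (1 - q^(n+1))` the new terms add up to
`q^(n+1) / (1 - q^(n+1))` times `1 - (1; q)_(n+1) = 1`.
-/

/-- The q-Pochhammer symbol `(a;q)_n = ∏_{j=0}^{n-1} (1 - a q^j)`. -/
noncomputable def qPoch (a q : ℂ) (n : ℕ) : ℂ := ∏ j ∈ Finset.range n, (1 - a * q ^ j)

/-- The Gaussian binomial coefficient `[n choose k]_q`. -/
noncomputable def qBinom (q : ℂ) (n k : ℕ) : ℂ :=
  qPoch q q n / (qPoch q q k * qPoch q q (n - k))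

open Finset

lemma sum_Icc_one_eq_sum_range {M : Type*} [AddCommMonoid M] (f : ℕ → M) (n : ℕ) :
    ∑ k ∈ Icc 1 n, f k = ∑ k ∈ range n, f (k + 1) := by
  rw [← Ico_add_one_right_eq_Icc, sum_Ico_eq_sum_range, add_tsub_cancel_right]
  simp only [add_comm 1]

lemma Nat.add_one_choose_two (k : ℕ) : (k + 1).choose 2 = k.choose 2 + k := by
  rw [Nat.choose_succ_succ', Nat.choose_one_right, add_comm]

lemma Nat.mul_add_one_div_two (k : ℕ) : k * (k + 1) / 2 = (k + 1).choose 2 := by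
  rw [Nat.choose_two_right, add_tsub_cancel_right, mul_comm]

lemma zpow_div_one_sub_pow {K : Type*} [Field K] {q : K} (hq : q ≠ 0) {k : ℕ}
    (hk : 1 - q ^ k ≠ 0) (e : ℤ) :
    q ^ e / (1 - q ^ k) = q ^ (e + k) / (1 - q ^ k) + q ^ e := by
  rw [zpow_add₀ hq, zpow_natCast]
  field_simp
  ring

section QAnalogues

variable {q : ℂ}

@[simp] lemma qPoch_zero (a : ℂ) : qPoch a q 0 = 1 := by simp [qPoch]

lemma qPoch_succ (a : ℂ) (n : ℕ) : qPoch a q (n + 1) = qPoch a q n * (1 - a * q ^ n) := by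
  simp [qPoch, prod_range_succ]

lemma qPoch_self_succ (n : ℕ) : qPoch q q (n + 1) = qPoch q q n * (1 - q ^ (n + 1)) := by
  rw [qPoch_succ, pow_succ']

lemma qPoch_eq_zero_of_mul_pow_eq_one {a : ℂ} {n j : ℕ} (hj : j < n) (ha : a * q ^ j = 1) :
    qPoch a q n = 0 :=
  prod_eq_zero (mem_range.2 hj) (sub_eq_zero.2 ha.symm)

variable (hq1 : ∀ j, 1 ≤ j → q ^ j ≠ 1)
include hq1

lemma one_sub_pow_ne_zero {j : ℕ} (hj : 1 ≤ j) : 1 - q ^ j ≠ 0 :=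
  sub_ne_zero.2 (hq1 j hj).symm

lemma qPoch_self_ne_zero (n : ℕ) : qPoch q q n ≠ 0 := by
  induction n with
  | zero => simp
  | succ n ih => rw [qPoch_self_succ]; exact mul_ne_zero ih (one_sub_pow_ne_zero hq1 (by omega))

@[simp] lemma qBinom_zero_right (n : ℕ) : qBinom q n 0 = 1 := by
  simp [qBinom, qPoch_self_ne_zero hq1]

@[simp] lemma qBinom_self (n : ℕ) : qBinom q n n = 1 := by
  simp [qBinom, qPoch_self_ne_zero hq1]

lemma qBinom_succ_succ {n k : ℕ} (hk : k < n) :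
    qBinom q (n + 1) (k + 1) = qBinom q n (k + 1) + q ^ (n - k) * qBinom q n k := by
  obtain ⟨t, rfl⟩ : ∃ t, n = k + 1 + t := ⟨n - (k + 1), by omega⟩
  simp only [qBinom, show k + 1 + t + 1 - (k + 1) = t + 1 by omega,
    show k + 1 + t - (k + 1) = t by omega, show k + 1 + t - k = t + 1 by omega]
  rw [show k + 1 + t + 1 = k + t + 1 + 1 by omega, show k + 1 + t = k + t + 1 by omega,
    qPoch_self_succ (k + t + 1), qPoch_self_succ k, qPoch_self_succ t]
  have := qPoch_self_ne_zero hq1 k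
  have := qPoch_self_ne_zero hq1 t
  have := qPoch_self_ne_zero hq1 (k + t + 1)
  have := one_sub_pow_ne_zero hq1 (j := k + 1) (by omega)
  have := one_sub_pow_ne_zero hq1 (j := t + 1) (by omega)
  field_simp
  ring

lemma qBinom_div_one_sub_pow {n k : ℕ} (hk : k ≤ n) :
    qBinom q n k / (1 - q ^ (k + 1)) = qBinom q (n + 1) (k + 1) / (1 - q ^ (n + 1)) := by
  obtain ⟨t, rfl⟩ : ∃ t, n = k + t := ⟨n - k, by omega⟩
  simp only [qBinom, show k + t - k = t by omega, show k + t + 1 - (k + 1) = t by omega,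
    qPoch_self_succ (k + t), qPoch_self_succ k]
  have := qPoch_self_ne_zero hq1 k
  have := qPoch_self_ne_zero hq1 t
  have := qPoch_self_ne_zero hq1 (k + t)
  have := one_sub_pow_ne_zero hq1 (j := k + 1) (by omega)
  have := one_sub_pow_ne_zero hq1 (j := k + t + 1) (by omega)
  field_simp

/- `qBinom q n k` is not `0` for `k > n` (the subtraction `n - k` truncates), so the first sum
on the right has to stop at `k = n`. -/
lemma sum_range_qBinom_succ (f : ℕ → ℂ) (n : ℕ) :
    ∑ k ∈ range (n + 2), qBinom q (n + 1) k * f k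
      = ∑ k ∈ range (n + 1), qBinom q n k * f k
        + ∑ k ∈ range (n + 1), q ^ (n - k) * qBinom q n k * f (k + 1) := by
  rw [sum_range_succ', sum_range_succ, sum_range_succ' _ n, sum_range_succ _ n]
  simp only [qBinom_zero_right hq1, qBinom_self hq1, Nat.sub_self, pow_zero, one_mul]
  have hpascal : ∀ k ∈ range n, qBinom q (n + 1) (k + 1) * f (k + 1)
      = qBinom q n (k + 1) * f (k + 1) + q ^ (n - k) * qBinom q n k * f (k + 1) := by
    intro k hk
    rw [qBinom_succ_succ hq1 (mem_range.1 hk)]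
    ring
  rw [sum_congr rfl hpascal, sum_add_distrib]
  ring

lemma sum_Icc_qBinom_succ (f : ℕ → ℂ) (n : ℕ) :
    ∑ k ∈ Icc 1 (n + 1), qBinom q (n + 1) k * f k
      = ∑ k ∈ Icc 1 n, qBinom q n k * f k
        + ∑ k ∈ range (n + 1), q ^ (n - k) * qBinom q n k * f (k + 1) := by
  have h := sum_range_qBinom_succ hq1 f n
  rw [sum_range_succ' (fun k => qBinom q (n + 1) k * f k),
    sum_range_succ' (fun k => qBinom q n k * f k)] at h
  simp only [qBinom_zero_right hq1] at h
  rw [sum_Icc_one_eq_sum_range, sum_Icc_one_eq_sum_range]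
  linear_combination h

theorem sum_range_qBinom_mul_pow (n : ℕ) (x : ℂ) :
    ∑ k ∈ range (n + 1), (-1) ^ k * qBinom q n k * q ^ k.choose 2 * x ^ k = qPoch x q n := by
  induction n with
  | zero => simp [qBinom_zero_right hq1]
  | succ n ih =>
    have hshift : ∀ k ∈ range (n + 1),
        q ^ (n - k) * qBinom q n k * ((-1) ^ (k + 1) * q ^ (k + 1).choose 2 * x ^ (k + 1))
          = -(x * q ^ n) * ((-1) ^ k * qBinom q n k * q ^ k.choose 2 * x ^ k) := by
      intro k hk
      have hexp : q ^ (n - k) * q ^ (k + 1).choose 2 = q ^ n * q ^ k.choose 2 := by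
        rw [← pow_add, ← pow_add, Nat.add_one_choose_two]
        congr 1
        have := mem_range.1 hk
        omega
      linear_combination (qBinom q n k * (-1) ^ (k + 1) * x ^ (k + 1)) * hexp
    have hcomm : ∀ m, ∑ k ∈ range (m + 1), (-1) ^ k * qBinom q m k * q ^ k.choose 2 * x ^ k
        = ∑ k ∈ range (m + 1), qBinom q m k * ((-1) ^ k * q ^ k.choose 2 * x ^ k) :=
      fun m => sum_congr rfl fun _ _ => by ring
    rw [hcomm, sum_range_qBinom_succ hq1, ← hcomm, sum_congr rfl hshift, ← mul_sum, ih,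
      qPoch_succ]
    ring

lemma sum_Icc_qBinom_mul_pow (n : ℕ) (x : ℂ) :
    ∑ k ∈ Icc 1 n, (-1) ^ (k - 1) * qBinom q n k * q ^ k.choose 2 * x ^ k
      = 1 - qPoch x q n := by
  rw [← sum_range_qBinom_mul_pow hq1, sum_range_succ', sum_Icc_one_eq_sum_range]
  simp only [add_tsub_cancel_right, pow_succ, qBinom_zero_right hq1, mul_neg_one, neg_mul,
    sum_neg_distrib]
  simp

lemma zpow_sub_add_one_mul_div_one_sub_pow (hq : q ≠ 0) {k : ℕ} (hk : 1 ≤ k) (r : ℕ) :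
    q ^ (((k * (k + 1) / 2 : ℕ) : ℤ) - ((r + 1 : ℕ) : ℤ) * k) / (1 - q ^ k)
      = q ^ (((k * (k + 1) / 2 : ℕ) : ℤ) - r * k) / (1 - q ^ k)
        + q ^ ((k.choose 2 : ℤ) - r * k) := by
  have hT : ((k * (k + 1) / 2 : ℕ) : ℤ) = k.choose 2 + k := by
    rw [Nat.mul_add_one_div_two, Nat.add_one_choose_two]; push_cast; rfl
  rw [hT,
    show (k.choose 2 + k : ℤ) - ((r + 1 : ℕ) : ℤ) * k = k.choose 2 - r * k by push_cast; ring,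
    show (k.choose 2 + k : ℤ) - r * k = k.choose 2 - r * k + k by ring,
    zpow_div_one_sub_pow hq (one_sub_pow_ne_zero hq1 hk)]

lemma sum_Icc_qBinom_mul_zpow (hq : q ≠ 0) {n r : ℕ} (hr : r < n) :
    ∑ k ∈ Icc 1 n, (-1) ^ (k - 1) * qBinom q n k * q ^ ((k.choose 2 : ℤ) - r * k) = 1 := by
  have h := sum_Icc_qBinom_mul_pow hq1 n (q ^ r)⁻¹
  rw [qPoch_eq_zero_of_mul_pow_eq_one hr (inv_mul_cancel₀ (pow_ne_zero r hq)), sub_zero] at h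
  refine (sum_congr rfl fun k _ => ?_).trans h
  rw [zpow_sub₀ hq, zpow_natCast, show (r : ℤ) * k = ((r * k : ℕ) : ℤ) by push_cast; ring,
    zpow_natCast, pow_mul, inv_pow, div_eq_mul_inv]
  ring

lemma qBinom_mul_pow_div_one_sub_pow {n k : ℕ} (hk : k ≤ n) :
    q ^ (n - k) * qBinom q n k * q ^ ((k + 1) * (k + 1 + 1) / 2) / (1 - q ^ (k + 1))
      = q ^ (n + 1) / (1 - q ^ (n + 1)) * (qBinom q (n + 1) (k + 1) * q ^ (k + 1).choose 2) := by
  have hexp : q ^ (n - k) * q ^ ((k + 1) * (k + 1 + 1) / 2)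
      = q ^ (n + 1) * q ^ (k + 1).choose 2 := by
    rw [← pow_add, ← pow_add, Nat.mul_add_one_div_two, Nat.add_one_choose_two (k + 1)]
    congr 1
    omega
  calc _ = q ^ (n - k) * q ^ ((k + 1) * (k + 1 + 1) / 2) * (qBinom q n k / (1 - q ^ (k + 1))) := by
        ring
    _ = q ^ (n + 1) * q ^ (k + 1).choose 2 * (qBinom q (n + 1) (k + 1) / (1 - q ^ (n + 1))) := by
        rw [hexp, qBinom_div_one_sub_pow hq1 hk]
    _ = _ := by ring

lemma sum_Icc_qBinom_mul_pow_div (n : ℕ) :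
    ∑ k ∈ Icc 1 n, (-1) ^ (k - 1) * qBinom q n k * q ^ (k * (k + 1) / 2) / (1 - q ^ k)
      = ∑ k ∈ Icc 1 n, q ^ k / (1 - q ^ k) := by
  have hform : ∀ m,
      ∑ k ∈ Icc 1 m, (-1) ^ (k - 1) * qBinom q m k * q ^ (k * (k + 1) / 2) / (1 - q ^ k)
      = ∑ k ∈ Icc 1 m, qBinom q m k * ((-1) ^ (k - 1) * q ^ (k * (k + 1) / 2) / (1 - q ^ k)) :=
    fun m => sum_congr rfl fun _ _ => by ring
  induction n with
  | zero => simp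
  | succ n ih =>
    have hterm : ∀ k ∈ range (n + 1), q ^ (n - k) * qBinom q n k
          * ((-1) ^ (k + 1 - 1) * q ^ ((k + 1) * (k + 1 + 1) / 2) / (1 - q ^ (k + 1)))
        = q ^ (n + 1) / (1 - q ^ (n + 1))
          * ((-1) ^ (k + 1 - 1) * qBinom q (n + 1) (k + 1) * q ^ (k + 1).choose 2
            * 1 ^ (k + 1)) := by
      intro k hk
      rw [add_tsub_cancel_right, one_pow, mul_one]
      linear_combination (-1) ^ k * qBinom_mul_pow_div_one_sub_pow hq1 (mem_range_succ_iff.1 hk)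
    have hqbt := sum_Icc_qBinom_mul_pow hq1 (n + 1) 1
    rw [qPoch_eq_zero_of_mul_pow_eq_one (j := 0) (by omega) (by simp), sub_zero,
      sum_Icc_one_eq_sum_range] at hqbt
    rw [hform, sum_Icc_qBinom_succ hq1, ← hform, ih, sum_Icc_succ_top (by omega : 1 ≤ n + 1),
      sum_congr rfl hterm, ← mul_sum, hqbt, mul_one]

end QAnalogues

/-- Generalized Van Hamme identity. -/
theorem stmt7 (n r : ℕ) (hr : r ≤ n) (q : ℂ) (hq : q ≠ 0)
    (hq1 : ∀ j, 1 ≤ j → q ^ j ≠ 1) :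
    ∑ k ∈ Finset.Icc 1 n,
        (-1 : ℂ) ^ (k - 1) * qBinom q n k *
          q ^ (((k * (k + 1) / 2 : ℕ) : ℤ) - (r : ℤ) * k) / (1 - q ^ k)
      = (r : ℂ) + ∑ k ∈ Finset.Icc 1 n, q ^ k / (1 - q ^ k) := by
  induction r with
  | zero => simpa only [Nat.cast_zero, zero_mul, sub_zero, zpow_natCast, zero_add] using
      sum_Icc_qBinom_mul_pow_div hq1 n
  | succ r ih =>
    have hstep : ∀ k ∈ Icc 1 n,
        (-1 : ℂ) ^ (k - 1) * qBinom q n k *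
            q ^ (((k * (k + 1) / 2 : ℕ) : ℤ) - ((r + 1 : ℕ) : ℤ) * k) / (1 - q ^ k)
          = (-1 : ℂ) ^ (k - 1) * qBinom q n k *
              q ^ (((k * (k + 1) / 2 : ℕ) : ℤ) - (r : ℤ) * k) / (1 - q ^ k)
            + (-1 : ℂ) ^ (k - 1) * qBinom q n k * q ^ ((k.choose 2 : ℤ) - r * k) := by
      intro k hk
      rw [mul_div_assoc, mul_div_assoc,
        zpow_sub_add_one_mul_div_one_sub_pow hq1 hq (mem_Icc.1 hk).1]
      ring
    rw [sum_congr rfl hstep, sum_add_distrib, ih (by omega),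
      sum_Icc_qBinom_mul_zpow hq1 hq (by omega)]
    push_cast
    ring
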